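/- The per-sample stochastic-complexity-based independence measure converges to the empirical conditional mutual information (Lemma 3): let X, Y, Z be fixed finite nonempty types, and for each n ≥ 1 let x_n : Fin n → X, y_n : Fin n → Y, z_n : Fin n → Z be arbitrary data samples. Then (1/n)·SCI(x_n; y_n | z_n) − Î_n → 0 as n → ∞, where Î_n = Ĥ(x_n | z_n) − Ĥ(x_n | ⟨z_n, y_n⟩) is the per-sample empirical conditional mutual information of the n-th dataset. -/
import Mathlib


open Finset

/-- The multinomial NML regret `R(L, n)`: the sum over all count vectors
`(h_1, …, h_L)` with `h_1 + ⋯ + h_L = n` of the maximum likelihood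
`(n! / (h_1! ⋯ h_L!)) · ∏_v (h_v / n)^{h_v}` (with the convention `0^0 = 1`). -/
noncomputable def regret (L n : ℕ) : ℝ :=
  ∑ h ∈ Finset.Nat.antidiagonalTuple L n,
    (Nat.multinomial Finset.univ h : ℝ) * ∏ v, ((h v : ℝ) / (n : ℝ)) ^ (h v)

/-- The conditional regret term `Δ_k(w) = ∑_{v ∈ W} log R(k, |{i : w i = v}|)`. -/
noncomputable def condRegret (k : ℕ) {n : ℕ} {W : Type*} [Fintype W] [DecidableEq W]
    (w : Fin n → W) : ℝ :=
  ∑ v : W, Real.log (regret k (Finset.univ.filter (fun i => w i = v)).card)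

/-- The unnormalized empirical conditional entropy `n·Ĥ(a | w) =
∑_{v} ∑_{u} N(u, v) · log(N(v) / N(u, v))`, where `N(u, v)` counts samples with
`a i = u` and `w i = v`, `N(v)` those with `w i = v`, and terms with
`N(u, v) = 0` vanish. -/
noncomputable def condEntN {n : ℕ} {A W : Type*}
    [Fintype A] [Fintype W] [DecidableEq A] [DecidableEq W]
    (a : Fin n → A) (w : Fin n → W) : ℝ :=
  ∑ v : W, ∑ u : A,
    ((Finset.univ.filter (fun i => a i = u ∧ w i = v)).card : ℝ) *
      Real.log (((Finset.univ.filter (fun i => w i = v)).card : ℝ) /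
        ((Finset.univ.filter (fun i => a i = u ∧ w i = v)).card : ℝ))

/-- The asymmetric stochastic-complexity score
`I_SC(x; y | z) = n·(Ĥ(x | z) − Ĥ(x | ⟨z, y⟩)) + Δ_{|X|}(z) − Δ_{|X|}(⟨z, y⟩)`. -/
noncomputable def ISC {n : ℕ} {X Y Z : Type*}
    [Fintype X] [Fintype Y] [Fintype Z] [DecidableEq X] [DecidableEq Y] [DecidableEq Z]
    (x : Fin n → X) (y : Fin n → Y) (z : Fin n → Z) : ℝ :=
  (condEntN x z - condEntN x (fun i => (z i, y i)))
    + condRegret (Fintype.card X) z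
    - condRegret (Fintype.card X) (fun i => (z i, y i))

/-- The stochastic complexity based independence measure
`SCI(x; y | z) = max(I_SC(x; y | z), I_SC(y; x | z))`. -/
noncomputable def SCI {n : ℕ} {X Y Z : Type*}
    [Fintype X] [Fintype Y] [Fintype Z] [DecidableEq X] [DecidableEq Y] [DecidableEq Z]
    (x : Fin n → X) (y : Fin n → Y) (z : Fin n → Z) : ℝ :=
  max (ISC x y z) (ISC y x z)

/-! ### Auxiliary lemmas: bounds on the regret -/

lemma regret_term_nonneg (L n : ℕ) (h : Fin L → ℕ) :
    0 ≤ (Nat.multinomial Finset.univ h : ℝ) * ∏ v, ((h v : ℝ) / (n : ℝ)) ^ (h v) := by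
  refine mul_nonneg (by positivity) (Finset.prod_nonneg fun v _ => ?_)
  positivity

lemma one_le_regret (L n : ℕ) (hL : 1 ≤ L) : 1 ≤ regret L n := by
  haveI : NeZero L := ⟨by omega⟩
  set i0 : Fin L := ⟨0, hL⟩
  set h0 : Fin L → ℕ := fun v => if v = i0 then n else 0 with hh0
  have hmem : h0 ∈ Finset.Nat.antidiagonalTuple L n := by
    rw [Finset.Nat.mem_antidiagonalTuple]
    simp [hh0]
  have hprod : (∏ v, ((h0 v : ℝ) / (n : ℝ)) ^ (h0 v)) = 1 := by
    refine Finset.prod_eq_one fun v _ => ?_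
    by_cases hv : v = i0
    · subst hv
      rcases Nat.eq_zero_or_pos n with hn | hn
      · simp [hh0, hn]
      · simp [hh0, div_self (by positivity : (n:ℝ) ≠ 0)]
    · simp [hh0, hv]
  have h1 : (1:ℝ) ≤ (Nat.multinomial Finset.univ h0 : ℝ) * ∏ v, ((h0 v : ℝ) / (n : ℝ)) ^ (h0 v) := by
    rw [hprod, mul_one]
    exact_mod_cast Nat.one_le_iff_ne_zero.mpr (Nat.multinomial_pos _ _).ne'
  calc (1:ℝ) ≤ _ := h1
    _ ≤ regret L n := Finset.single_le_sum (fun h _ => regret_term_nonneg L n h) hmem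

lemma regret_term_le_one (L n : ℕ) (hn : 1 ≤ n) (h : Fin L → ℕ)
    (hmem : h ∈ Finset.Nat.antidiagonalTuple L n) :
    (Nat.multinomial Finset.univ h : ℝ) * ∏ v, ((h v : ℝ) / (n : ℝ)) ^ (h v) ≤ 1 := by
  have hsum : ∑ v, h v = n := (Finset.Nat.mem_antidiagonalTuple).mp hmem
  have key : (∑ v, ((h v : ℝ) / (n : ℝ))) ^ n
      = ∑ k ∈ Finset.piAntidiag Finset.univ n,
          (Nat.multinomial Finset.univ k : ℝ) * ∏ v, ((h v : ℝ) / (n : ℝ)) ^ (k v) :=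
    Finset.sum_pow_eq_sum_piAntidiag Finset.univ _ n
  have hne : (n:ℝ) ≠ 0 := by positivity
  have hl : (∑ v, ((h v : ℝ) / (n : ℝ))) ^ n = 1 := by
    rw [← Finset.sum_div]
    rw [show (∑ v, (h v : ℝ)) = (n:ℝ) by exact_mod_cast congrArg (Nat.cast (R := ℝ)) hsum]
    simp [div_self hne]
  rw [Finset.piAntidiag_univ_fin_eq_antidiagonalTuple n L] at key
  rw [hl] at key
  rw [key]
  exact Finset.single_le_sum
    (f := fun k => (Nat.multinomial Finset.univ k : ℝ) * ∏ v, ((h v : ℝ) / (n : ℝ)) ^ (k v))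
    (fun k _ => mul_nonneg (by positivity) (Finset.prod_nonneg fun v _ => by positivity)) hmem

lemma card_antidiagonalTuple_le (L n : ℕ) :
    (Finset.Nat.antidiagonalTuple L n).card ≤ (n+1)^L := by
  have := Finset.card_le_card_of_injOn
    (f := fun (h : Fin L → ℕ) (v : Fin L) => (⟨min (h v) n, by omega⟩ : Fin (n+1)))
    (s := Finset.Nat.antidiagonalTuple L n) (t := Finset.univ)
    (fun h _ => Finset.mem_univ _) ?_
  · simpa [Finset.card_univ] using this
  · intro h1 hm1 h2 hm2 heq
    simp only [Finset.mem_coe, Finset.Nat.mem_antidiagonalTuple] at hm1 hm2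
    funext v
    have b1 : h1 v ≤ n := hm1 ▸ Finset.single_le_sum (fun _ _ => Nat.zero_le _) (Finset.mem_univ v)
    have b2 : h2 v ≤ n := hm2 ▸ Finset.single_le_sum (fun _ _ => Nat.zero_le _) (Finset.mem_univ v)
    have := congrFun heq v
    simp only [Fin.mk.injEq] at this
    omega

lemma regret_le (L n : ℕ) : regret L n ≤ ((n:ℝ)+1)^L := by
  rcases Nat.eq_zero_or_pos n with hn | hn
  · subst hn
    have : regret L 0 = 1 := by
      unfold regret
      rw [show Finset.Nat.antidiagonalTuple L 0 = {0} from ?_]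
      · have hm : Nat.multinomial (Finset.univ : Finset (Fin L)) (0 : Fin L → ℕ) = 1 := by
          have := Nat.multinomial_spec (Finset.univ : Finset (Fin L)) (0 : Fin L → ℕ)
          simpa using this
        simp [hm]
      · ext f; simp [Finset.Nat.mem_antidiagonalTuple, funext_iff]
    rw [this]; push_cast; exact one_le_pow₀ (by norm_num)
  · calc regret L n ≤ ∑ _h ∈ Finset.Nat.antidiagonalTuple L n, (1:ℝ) :=
        Finset.sum_le_sum fun h hm => regret_term_le_one L n hn h hm
    _ = (Finset.Nat.antidiagonalTuple L n).card := by simp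
    _ ≤ ((n+1)^L : ℕ) := by exact_mod_cast card_antidiagonalTuple_le L n
    _ = ((n:ℝ)+1)^L := by push_cast; ring

/-! ### Auxiliary lemmas: the empirical entropy and symmetry of CMI -/

noncomputable def Hn {n : ℕ} {W : Type*} [Fintype W] [DecidableEq W] (w : Fin n → W) : ℝ :=
  ∑ v : W, ((Finset.univ.filter (fun i => w i = v)).card : ℝ) *
      Real.log ((Finset.univ.filter (fun i => w i = v)).card : ℝ)

lemma Hn_comp_equiv {n : ℕ} {W W' : Type*} [Fintype W] [DecidableEq W]
    [Fintype W'] [DecidableEq W'] (e : W ≃ W') (w : Fin n → W) :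
    Hn (fun i => e (w i)) = Hn w := by
  unfold Hn
  rw [← e.sum_comp]
  congr 1; funext v
  have : (Finset.univ.filter (fun i => e (w i) = e v))
      = (Finset.univ.filter (fun i => w i = v)) := by
    apply Finset.filter_congr; intro i _; simp [e.apply_eq_iff_eq]
  simp only [this]

lemma card_filter_sum {n : ℕ} {A W : Type*} [Fintype A] [Fintype W] [DecidableEq A] [DecidableEq W]
    (a : Fin n → A) (w : Fin n → W) (v : W) :
    ∑ u : A, (Finset.univ.filter (fun i => a i = u ∧ w i = v)).card
      = (Finset.univ.filter (fun i => w i = v)).card := by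
  simp_rw [Finset.card_filter]
  rw [Finset.sum_comm]
  congr 1; funext i
  by_cases h : w i = v <;> simp [h]

lemma condEntN_eq {n : ℕ} {A W : Type*} [Fintype A] [Fintype W] [DecidableEq A] [DecidableEq W]
    (a : Fin n → A) (w : Fin n → W) :
    condEntN a w = Hn w - Hn (fun i => (a i, w i)) := by
  have hpair : Hn (fun i => (a i, w i))
      = ∑ v : W, ∑ u : A, ((Finset.univ.filter (fun i => a i = u ∧ w i = v)).card : ℝ) *
          Real.log ((Finset.univ.filter (fun i => a i = u ∧ w i = v)).card : ℝ) := by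
    unfold Hn
    rw [Fintype.sum_prod_type, Finset.sum_comm]
    congr 1; funext v
    congr 1; funext u
    have : (Finset.univ.filter (fun i => (a i, w i) = (u, v)))
        = (Finset.univ.filter (fun i => a i = u ∧ w i = v)) := by
      apply Finset.filter_congr; intro i _; simp [Prod.ext_iff]
    simp only [this]
  have hW : Hn w = ∑ v : W, ∑ u : A, ((Finset.univ.filter (fun i => a i = u ∧ w i = v)).card : ℝ) *
      Real.log ((Finset.univ.filter (fun i => w i = v)).card : ℝ) := by
    unfold Hn
    congr 1; funext v
    rw [← Finset.sum_mul]
    congr 1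
    rw [← Nat.cast_sum]
    exact_mod_cast (congrArg (Nat.cast (R := ℝ)) (card_filter_sum a w v)).symm
  rw [hpair, hW, condEntN, ← Finset.sum_sub_distrib]
  congr 1; funext v
  rw [← Finset.sum_sub_distrib]
  congr 1; funext u
  set c := ((Finset.univ.filter (fun i => a i = u ∧ w i = v)).card : ℝ) with hc
  set d := ((Finset.univ.filter (fun i => w i = v)).card : ℝ) with hd
  rcases eq_or_ne c 0 with h0 | h0
  · simp [h0]
  · have hcpos : (0:ℝ) < c := lt_of_le_of_ne (by positivity) (Ne.symm h0)
    have hdpos : (0:ℝ) < d := by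
      have hle : (Finset.univ.filter (fun i => a i = u ∧ w i = v)).card ≤
          (Finset.univ.filter (fun i => w i = v)).card := by
        apply Finset.card_le_card
        intro i hi
        simp only [Finset.mem_filter] at hi ⊢
        exact ⟨hi.1, hi.2.2⟩
      have : c ≤ d := by rw [hc, hd]; exact_mod_cast hle
      linarith
    rw [Real.log_div hdpos.ne' h0]
    ring

lemma cmi_symm {n : ℕ} {X Y Z : Type*}
    [Fintype X] [Fintype Y] [Fintype Z] [DecidableEq X] [DecidableEq Y] [DecidableEq Z]
    (x : Fin n → X) (y : Fin n → Y) (z : Fin n → Z) :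
    condEntN x z - condEntN x (fun i => (z i, y i))
      = condEntN y z - condEntN y (fun i => (z i, x i)) := by
  rw [condEntN_eq, condEntN_eq, condEntN_eq, condEntN_eq]
  have h1 : Hn (fun i => (z i, x i)) = Hn (fun i => (x i, z i)) :=
    Hn_comp_equiv (Equiv.prodComm X Z) (fun i => (x i, z i))
  have h2 : Hn (fun i => (z i, y i)) = Hn (fun i => (y i, z i)) :=
    Hn_comp_equiv (Equiv.prodComm Y Z) (fun i => (y i, z i))
  have h3 : Hn (fun i => (y i, (z i, x i))) = Hn (fun i => (x i, (z i, y i))) :=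
    Hn_comp_equiv (⟨fun p => (p.2.2, (p.2.1, p.1)), fun p => (p.2.2, (p.2.1, p.1)),
      fun p => rfl, fun p => rfl⟩ : X × (Z × Y) ≃ Y × (Z × X)) (fun i => (x i, (z i, y i)))
  rw [h1, h2, h3]
  ring

/-! ### Bounds on the conditional regret -/

lemma condRegret_nonneg {k n : ℕ} {W : Type*} [Fintype W] [DecidableEq W]
    (hk : 1 ≤ k) (w : Fin n → W) : 0 ≤ condRegret k w :=
  Finset.sum_nonneg fun v _ => Real.log_nonneg (one_le_regret k _ hk)

lemma condRegret_le {k n : ℕ} {W : Type*} [Fintype W] [DecidableEq W]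
    (hk : 1 ≤ k) (w : Fin n → W) :
    condRegret k w ≤ (Fintype.card W : ℝ) * (k * Real.log ((n:ℝ)+1)) := by
  have key : ∀ v : W, Real.log (regret k (Finset.univ.filter (fun i => w i = v)).card)
      ≤ k * Real.log ((n:ℝ)+1) := by
    intro v
    set m := (Finset.univ.filter (fun i => w i = v)).card with hm
    have hmn : m ≤ n := by
      calc m ≤ (Finset.univ : Finset (Fin n)).card := Finset.card_filter_le _ _
        _ = n := by simp
    calc Real.log (regret k m) ≤ Real.log (((m:ℝ)+1)^k) :=
          Real.log_le_log (lt_of_lt_of_le one_pos (one_le_regret k m hk)) (regret_le k m)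
      _ = k * Real.log ((m:ℝ)+1) := by rw [Real.log_pow]
      _ ≤ k * Real.log ((n:ℝ)+1) := by
          apply mul_le_mul_of_nonneg_left _ (by positivity)
          have : (m:ℝ) ≤ (n:ℝ) := by exact_mod_cast hmn
          exact Real.log_le_log (by positivity) (by linarith)
  calc condRegret k w ≤ ∑ _v : W, (k:ℝ) * Real.log ((n:ℝ)+1) :=
        Finset.sum_le_sum fun v _ => key v
    _ = (Fintype.card W : ℝ) * (k * Real.log ((n:ℝ)+1)) := by
        rw [Finset.sum_const, Finset.card_univ, nsmul_eq_mul]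

/-! ### The main theorem -/

/-- Lemma 3: for arbitrary data samples `x_n, y_n, z_n` of size `n` over fixed
finite domains, the per-sample score `(1/n)·SCI(x_n; y_n | z_n)` converges to the
per-sample empirical conditional mutual information
`Î_n = (1/n)·(n·Ĥ(x_n | z_n) − n·Ĥ(x_n | ⟨z_n, y_n⟩))`, i.e. their difference
tends to `0` as `n → ∞`. -/
theorem sci_tendsto_cmi {X Y Z : Type*}
    [Fintype X] [Fintype Y] [Fintype Z] [DecidableEq X] [DecidableEq Y] [DecidableEq Z]
    [Nonempty X] [Nonempty Y] [Nonempty Z]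
    (x : ∀ n : ℕ, Fin n → X) (y : ∀ n : ℕ, Fin n → Y) (z : ∀ n : ℕ, Fin n → Z) :
    Filter.Tendsto
      (fun n : ℕ =>
        (1 / (n : ℝ)) * SCI (x n) (y n) (z n) -
          (1 / (n : ℝ)) *
            (condEntN (x n) (z n) - condEntN (x n) (fun i => (z n i, y n i))))
      Filter.atTop (nhds 0) := by
  have hX : 1 ≤ Fintype.card X := Fintype.card_pos
  have hY : 1 ≤ Fintype.card Y := Fintype.card_pos
  set C : ℝ := (Fintype.card Z : ℝ) * (1 + (Fintype.card Y : ℝ)) * (Fintype.card X : ℝ)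
      + (Fintype.card Z : ℝ) * (1 + (Fintype.card X : ℝ)) * (Fintype.card Y : ℝ) with hC
  set g : ℕ → ℝ := fun n => C * (Real.log ((n:ℝ)+1) / (n:ℝ)) with hg
  have hgtendsto : Filter.Tendsto g Filter.atTop (nhds 0) := by
    have h1 : Filter.Tendsto (fun r : ℝ => Real.log r / r) Filter.atTop (nhds 0) :=
      Real.isLittleO_log_id_atTop.tendsto_div_nhds_zero
    have h2 : Filter.Tendsto (fun n : ℕ => (n:ℝ)+1) Filter.atTop Filter.atTop :=
      Filter.tendsto_atTop_add_const_right _ 1 tendsto_natCast_atTop_atTop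
    have h3 : Filter.Tendsto (fun n : ℕ => Real.log ((n:ℝ)+1) / ((n:ℝ)+1))
        Filter.atTop (nhds 0) := h1.comp h2
    have h4 : Filter.Tendsto (fun n : ℕ => ((n:ℝ)+1)/(n:ℝ)) Filter.atTop (nhds 1) := by
      have heq : (fun n : ℕ => (1:ℝ) + 1/(n:ℝ)) =ᶠ[Filter.atTop]
          (fun n : ℕ => ((n:ℝ)+1)/(n:ℝ)) := by
        filter_upwards [Filter.eventually_ge_atTop 1] with n hn
        have : (n:ℝ) ≠ 0 := by positivity
        field_simp
      have := (tendsto_const_nhds (x := (1:ℝ)) (f := Filter.atTop (α := ℕ))).add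
        tendsto_one_div_atTop_nhds_zero_nat
      rw [add_zero] at this
      exact Filter.Tendsto.congr' heq this
    have h5 : Filter.Tendsto (fun n : ℕ => Real.log ((n:ℝ)+1) / (n:ℝ))
        Filter.atTop (nhds 0) := by
      have heq : (fun n : ℕ => (Real.log ((n:ℝ)+1) / ((n:ℝ)+1)) * (((n:ℝ)+1)/(n:ℝ)))
          =ᶠ[Filter.atTop] (fun n : ℕ => Real.log ((n:ℝ)+1) / (n:ℝ)) := by
        filter_upwards [Filter.eventually_ge_atTop 1] with n hn
        have h0 : ((n:ℝ)+1) ≠ 0 := by positivity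
        field_simp
      have := h3.mul h4
      rw [zero_mul] at this
      exact Filter.Tendsto.congr' heq this
    have := h5.const_mul C
    rwa [mul_zero] at this
  apply squeeze_zero_norm' _ hgtendsto
  filter_upwards [Filter.eventually_ge_atTop 1] with n hn
  have hn0 : (0:ℝ) < (n:ℝ) := by exact_mod_cast hn
  set E : ℝ := condEntN (x n) (z n) - condEntN (x n) (fun i => (z n i, y n i)) with hE
  set A : ℝ := condRegret (Fintype.card X) (z n)
      - condRegret (Fintype.card X) (fun i => (z n i, y n i)) with hA
  set B : ℝ := condRegret (Fintype.card Y) (z n)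
      - condRegret (Fintype.card Y) (fun i => (z n i, x n i)) with hB
  have hmax : SCI (x n) (y n) (z n) - E = max A B := by
    unfold SCI ISC
    rw [← cmi_symm (x n) (y n) (z n)]
    rw [hE, hA, hB]
    rw [show ∀ a b c : ℝ, a + b - c = a + (b - c) from fun a b c => by ring,
        show ∀ a b c : ℝ, a + b - c = a + (b - c) from fun a b c => by ring]
    rw [max_add_add_left]
    ring
  set L : ℝ := Real.log ((n:ℝ)+1) with hLdef
  have hL0 : 0 ≤ L := Real.log_nonneg (by push_cast; linarith)
  have zr : (0:ℝ) ≤ (Fintype.card Z : ℝ) := by positivity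
  have xr : (1:ℝ) ≤ (Fintype.card X : ℝ) := by exact_mod_cast hX
  have yr : (1:ℝ) ≤ (Fintype.card Y : ℝ) := by exact_mod_cast hY
  have hAbound : |A| ≤ C * L := by
    rw [abs_le]
    constructor
    · have h1 : condRegret (Fintype.card X) (fun i => (z n i, y n i))
          ≤ (Fintype.card (Z × Y) : ℝ) * ((Fintype.card X) * L) := condRegret_le hX _
      have h2 : 0 ≤ condRegret (Fintype.card X) (z n) := condRegret_nonneg hX _
      rw [Fintype.card_prod] at h1
      push_cast at h1
      rw [hA, hC]
      nlinarith [mul_nonneg (mul_nonneg zr (by linarith : (0:ℝ) ≤ 1 + (Fintype.card X : ℝ)))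
        (mul_nonneg (by linarith : (0:ℝ) ≤ (Fintype.card Y : ℝ)) hL0),
        mul_nonneg zr (mul_nonneg (by linarith : (0:ℝ) ≤ (Fintype.card X : ℝ)) hL0)]
    · have h1 : condRegret (Fintype.card X) (z n)
          ≤ (Fintype.card Z : ℝ) * ((Fintype.card X) * L) := condRegret_le hX _
      have h2 : 0 ≤ condRegret (Fintype.card X) (fun i => (z n i, y n i)) :=
        condRegret_nonneg hX _
      rw [hA, hC]
      nlinarith [mul_nonneg (mul_nonneg zr (by linarith : (0:ℝ) ≤ 1 + (Fintype.card X : ℝ)))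
        (mul_nonneg (by linarith : (0:ℝ) ≤ (Fintype.card Y : ℝ)) hL0),
        mul_nonneg zr (mul_nonneg (mul_nonneg (by linarith : (0:ℝ) ≤ (Fintype.card Y : ℝ))
          (by linarith : (0:ℝ) ≤ (Fintype.card X : ℝ))) hL0)]
  have hBbound : |B| ≤ C * L := by
    rw [abs_le]
    constructor
    · have h1 : condRegret (Fintype.card Y) (fun i => (z n i, x n i))
          ≤ (Fintype.card (Z × X) : ℝ) * ((Fintype.card Y) * L) := condRegret_le hY _
      have h2 : 0 ≤ condRegret (Fintype.card Y) (z n) := condRegret_nonneg hY _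
      rw [Fintype.card_prod] at h1
      push_cast at h1
      rw [hB, hC]
      nlinarith [mul_nonneg (mul_nonneg zr (by linarith : (0:ℝ) ≤ 1 + (Fintype.card Y : ℝ)))
        (mul_nonneg (by linarith : (0:ℝ) ≤ (Fintype.card X : ℝ)) hL0),
        mul_nonneg zr (mul_nonneg (by linarith : (0:ℝ) ≤ (Fintype.card Y : ℝ)) hL0)]
    · have h1 : condRegret (Fintype.card Y) (z n)
          ≤ (Fintype.card Z : ℝ) * ((Fintype.card Y) * L) := condRegret_le hY _
      have h2 : 0 ≤ condRegret (Fintype.card Y) (fun i => (z n i, x n i)) :=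
        condRegret_nonneg hY _
      rw [hB, hC]
      nlinarith [mul_nonneg (mul_nonneg zr (by linarith : (0:ℝ) ≤ 1 + (Fintype.card Y : ℝ)))
        (mul_nonneg (by linarith : (0:ℝ) ≤ (Fintype.card X : ℝ)) hL0),
        mul_nonneg zr (mul_nonneg (mul_nonneg (by linarith : (0:ℝ) ≤ (Fintype.card Y : ℝ))
          (by linarith : (0:ℝ) ≤ (Fintype.card X : ℝ))) hL0)]
  have hmaxabs : |max A B| ≤ C * L :=
    le_trans (abs_max_le_max_abs_abs) (max_le hAbound hBbound)
  have hrw : (1 / (n : ℝ)) * SCI (x n) (y n) (z n) - (1 / (n : ℝ)) * E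
      = (1 / (n : ℝ)) * (max A B) := by
    rw [← hmax]; ring
  rw [Real.norm_eq_abs, hrw, abs_mul, abs_of_nonneg (by positivity : (0:ℝ) ≤ 1/(n:ℝ))]
  calc (1/(n:ℝ)) * |max A B| ≤ (1/(n:ℝ)) * (C * L) := by
        apply mul_le_mul_of_nonneg_left hmaxabs (by positivity)
    _ = g n := by rw [hg, hLdef]; ring
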